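/- arXiv:math-ph/0411003 — 2 statements merged into one kernel-verified Lean document; each statement's English description precedes it below -/
import Mathlib

section
/- Let J : ℕ → ℝ be a function with J(r) > 0 for all r, and suppose J is of subexponential growth, i.e., for every ε > 0 there is C_ε with J(r) ≤ C_ε e^{εr} for all r. Then for every ε > 0 and every L ∈ ℕ with L ≥ 1, there exist infinitely many r ∈ ℕ such that J(r + L) ≤ e^ε J(r). -/
/-- A positive function `J : ℕ → ℝ` of subexponential growth must, for every `ε > 0` and every
increment `L ≥ 1`, satisfy `J (r + L) ≤ e^ε J r` for infinitely many `r`. -/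
theorem subexponential_growth_infinitely_many_small_increments
    (J : ℕ → ℝ) (hpos : ∀ r, 0 < J r)
    (hsub : ∀ ε > (0 : ℝ), ∃ C : ℝ, ∀ r : ℕ, J r ≤ C * Real.exp (ε * r)) :
    ∀ ε > (0 : ℝ), ∀ L : ℕ, 1 ≤ L →
      {r : ℕ | J (r + L) ≤ Real.exp ε * J r}.Infinite := by
  intro ε hε L hL
  by_contra hfin
  rw [Set.not_infinite] at hfin
  obtain ⟨N, hN⟩ : ∃ N : ℕ, ∀ r ≥ N, Real.exp ε * J r < J (r + L) := by
    obtain ⟨N, hN⟩ := hfin.bddAbove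
    refine ⟨N + 1, fun r hr => ?_⟩
    by_contra h
    push_neg at h
    have : r ≤ N := hN h
    omega
  have key : ∀ k : ℕ, Real.exp (ε * k) * J N ≤ J (N + k * L) := by
    intro k
    induction k with
    | zero => simp
    | succ k ih =>
      have h1 := hN (N + k * L) (Nat.le_add_right _ _)
      have h2 : Real.exp ε * (Real.exp (ε * k) * J N) ≤ Real.exp ε * J (N + k * L) :=
        mul_le_mul_of_nonneg_left ih (Real.exp_pos ε).le
      have h3 : N + k * L + L = N + (k + 1) * L := by ring
      calc Real.exp (ε * (k + 1 : ℕ)) * J N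
          = Real.exp ε * (Real.exp (ε * k) * J N) := by
            rw [← mul_assoc, ← Real.exp_add]; push_cast; ring_nf
        _ ≤ Real.exp ε * J (N + k * L) := h2
        _ ≤ J (N + (k + 1) * L) := by rw [← h3]; exact h1.le
  have hL' : (0 : ℝ) < L := by exact_mod_cast hL
  have hε' : (0 : ℝ) < ε / (2 * L) := by positivity
  obtain ⟨C, hC⟩ := hsub _ hε'
  have hcontra : ∀ k : ℕ, Real.exp (ε / 2 * k) ≤ C * Real.exp (ε / (2 * L) * N) / J N := by
    intro k
    have h1 := (key k).trans (hC (N + k * L))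
    have hcast : ((N + k * L : ℕ) : ℝ) = (N : ℝ) + k * L := by push_cast; ring
    have h2 : ε / (2 * L) * ((N : ℝ) + k * L) = ε / (2 * L) * N + ε / 2 * k := by
      field_simp
    rw [hcast, h2, Real.exp_add] at h1
    rw [le_div_iff₀ (hpos N)]
    refine le_of_mul_le_mul_right ?_ (Real.exp_pos (ε / 2 * k))
    calc Real.exp (ε / 2 * k) * J N * Real.exp (ε / 2 * k)
        = Real.exp (ε * k) * J N := by
          rw [mul_comm (Real.exp (ε / 2 * k) * J N), ← mul_assoc, ← Real.exp_add]; ring_nf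
      _ ≤ C * (Real.exp (ε / (2 * L) * N) * Real.exp (ε / 2 * k)) := h1
      _ = C * Real.exp (ε / (2 * L) * N) * Real.exp (ε / 2 * k) := by ring
  set M := C * Real.exp (ε / (2 * L) * N) / J N with hM
  obtain ⟨k, hk⟩ := exists_nat_gt (2 * M / ε)
  have h1 := hcontra k
  have h2 : ε / 2 * k + 1 ≤ Real.exp (ε / 2 * k) := Real.add_one_le_exp _
  have h3 : M < ε / 2 * k := by
    rw [div_lt_iff₀ hε] at hk
    nlinarith
  linarith
end

section
/- Let Γ₀ be a finite quantum graph with Neumann vertex conditions and Hamiltonian −d²/dx², and suppose λ ranges over a compact set K ⊂ ℝ disjoint from the Dirichlet spectrum of Γ₀. Suppose Λ : K \ {λ₀} → ℝ is a function with |Λ(λ)| → ∞ as λ → λ₀. Then there is a punctured neighborhood U of λ₀ such that for λ ∈ U there is no nonzero function u on Γ₀, H² on each edge, satisfying −u'' = λu on each edge, continuity at the vertices, and Σ_{e ∋ v} du/dx_e(v) = −Λ(λ) u(v) at every vertex v. -/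
open Real Set Filter Topology

namespace DecorGapAux

noncomputable def kk (lam : ℝ) : ℂ :=
  (Real.sqrt lam : ℂ) + (Real.sqrt (-lam) : ℂ) * Complex.I

lemma kk_sq (lam : ℝ) : kk lam ^ 2 = (lam : ℂ) := by
  rcases le_total 0 lam with h | h
  · have h1 : Real.sqrt (-lam) = 0 := Real.sqrt_eq_zero'.mpr (by linarith)
    have h2 : Real.sqrt lam ^ 2 = lam := Real.sq_sqrt h
    have e : kk lam = (Real.sqrt lam : ℂ) := by rw [kk, h1]; simp
    rw [e, ← Complex.ofReal_pow, h2]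
  · have h1 : Real.sqrt lam = 0 := Real.sqrt_eq_zero'.mpr h
    have h2 : Real.sqrt (-lam) ^ 2 = -lam := Real.sq_sqrt (by linarith)
    have e : kk lam = (Real.sqrt (-lam) : ℂ) * Complex.I := by rw [kk, h1]; simp
    rw [e, mul_pow, Complex.I_sq, ← Complex.ofReal_pow, h2]
    push_cast
    ring

lemma kk_cont : Continuous kk := by
  unfold kk; fun_prop

lemma kk_ne_zero {lam : ℝ} (h : lam ≠ 0) : kk lam ≠ 0 := by
  intro h0
  apply h
  have := kk_sq lam
  rw [h0] at this
  simpa using this.symm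

noncomputable def SS (lam L : ℝ) : ℂ := ∫ t in (0:ℝ)..L, Complex.cos (kk lam * t)

lemma cont_integrand (lam : ℝ) : Continuous fun t : ℝ => Complex.cos (kk lam * t) := by
  fun_prop

lemma SS_hasDerivAt (lam x : ℝ) :
    HasDerivAt (fun y => SS lam y) (Complex.cos (kk lam * x)) x :=
  ((cont_integrand lam).integral_hasStrictDerivAt 0 x).hasDerivAt

lemma ofReal_hasDerivAt {x : ℝ} : HasDerivAt (fun y : ℝ => (y : ℂ)) 1 x := by
  simpa using (hasDerivAt_id x).ofReal_comp

lemma sin_eq_kk_mul_SS (lam L : ℝ) : Complex.sin (kk lam * L) = kk lam * SS lam L := by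
  set k := kk lam
  have hder : ∀ x : ℝ, HasDerivAt (fun y : ℝ => Complex.sin (k * y) - k * SS lam y) 0 x := by
    intro x
    have h1 : HasDerivAt (fun y : ℝ => k * (y : ℂ)) k x := by
      simpa using ofReal_hasDerivAt.const_mul k
    have h2 : HasDerivAt (fun y : ℝ => Complex.sin (k * y)) (Complex.cos (k * x) * k) x :=
      HasDerivAt.comp (h₂ := Complex.sin) x (Complex.hasDerivAt_sin (k * x)) h1
    have h3 := (SS_hasDerivAt lam x).const_mul k
    have := h2.sub h3
    convert this using 1
    · rfl
    · rfl
    · ring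
  have hdiff : Differentiable ℝ (fun y : ℝ => Complex.sin (k * y) - k * SS lam y) :=
    fun x => (hder x).differentiableAt
  have hconst := is_const_of_deriv_eq_zero hdiff (fun x => (hder x).deriv) L 0
  have h0 : SS lam 0 = 0 := intervalIntegral.integral_same
  simp only [Complex.ofReal_zero, mul_zero, Complex.sin_zero, h0] at hconst
  linear_combination hconst

lemma SS_zero_lam (L : ℝ) : SS 0 L = (L : ℂ) := by
  have hk : kk 0 = 0 := by simp [kk]
  simp [SS, hk]

lemma exp_factor {lam L : ℝ} {u : ℝ → ℂ} (hu : ContDiff ℝ 2 u)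
    (hode : ∀ x ∈ Icc (0:ℝ) L, deriv (deriv u) x = -(lam:ℂ) * u x)
    {c : ℂ} (hc : c ^ 2 = -(lam:ℂ)) :
    ∀ x ∈ Icc (0:ℝ) L,
      Complex.exp (-(c * x)) * (deriv u x + c * u x) = deriv u 0 + c * u 0 := by
  have hu1 : Differentiable ℝ u := hu.differentiable two_ne_zero
  have hu2 : ContDiff ℝ 1 (deriv u) := by
    have h : ContDiff ℝ (1 + 1 : ℕ) u := by exact_mod_cast hu
    exact (contDiff_succ_iff_deriv.mp h).2.2
  have hu2' : Differentiable ℝ (deriv u) := hu2.differentiable one_ne_zero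
  have hcont : Continuous fun x : ℝ => Complex.exp (-(c * x)) * (deriv u x + c * u x) := by
    have := hu2.continuous
    have := hu1.continuous
    fun_prop
  have hder : ∀ x ∈ Ico (0:ℝ) L,
      HasDerivWithinAt (fun x : ℝ => Complex.exp (-(c * x)) * (deriv u x + c * u x))
        0 (Ici x) x := by
    intro x hx
    have hx' : x ∈ Icc (0:ℝ) L := Ico_subset_Icc_self hx
    have hA : HasDerivAt (fun y : ℝ => -(c * (y:ℂ))) (-c) x := by
      have h := (ofReal_hasDerivAt (x := x)).const_mul c |>.neg
      rw [mul_one] at h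
      exact h
    have hE : HasDerivAt (fun y : ℝ => Complex.exp (-(c * y)))
        (Complex.exp (-(c * x)) * -c) x := hA.cexp
    have hD : HasDerivAt (deriv u) (deriv (deriv u) x) x := (hu2' x).hasDerivAt
    have hU : HasDerivAt u (deriv u x) x := (hu1 x).hasDerivAt
    have hsum : HasDerivAt (fun y : ℝ => deriv u y + c * u y)
        (deriv (deriv u) x + c * deriv u x) x := hD.add (hU.const_mul c)
    have hf := hE.mul hsum
    have h0 : Complex.exp (-(c * x)) * -c * (deriv u x + c * u x) +
        Complex.exp (-(c * x)) * (deriv (deriv u) x + c * deriv u x) = 0 := by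
      rw [hode x hx']
      linear_combination (-(Complex.exp (-(c * (x:ℝ))) * u x)) * hc
    rw [h0] at hf
    exact hf.hasDerivWithinAt
  intro x hx
  have := constant_of_has_deriv_right_zero hcont.continuousOn hder x hx
  simpa using this

lemma deriv_const_on {L : ℝ} {u : ℝ → ℂ} (hu : ContDiff ℝ 2 u)
    (hode : ∀ x ∈ Icc (0:ℝ) L, deriv (deriv u) x = -((0:ℝ):ℂ) * u x) :
    ∀ x ∈ Icc (0:ℝ) L, u x = u 0 + deriv u 0 * x := by
  have h := exp_factor hu hode (c := 0) (by norm_num)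
  have hd : ∀ x ∈ Icc (0:ℝ) L, deriv u x = deriv u 0 := by
    intro x hx
    have := h x hx
    simpa using this
  have hu1 : Differentiable ℝ u := hu.differentiable two_ne_zero
  have hcont : Continuous fun x : ℝ => u x - deriv u 0 * x := by
    have := hu1.continuous
    fun_prop
  have hder : ∀ x ∈ Ico (0:ℝ) L,
      HasDerivWithinAt (fun x : ℝ => u x - deriv u 0 * x) 0 (Ici x) x := by
    intro x hx
    have hU : HasDerivAt u (deriv u x) x := (hu1 x).hasDerivAt
    have hlin : HasDerivAt (fun y : ℝ => deriv u 0 * (y:ℂ)) (deriv u 0) x := by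
      simpa using ofReal_hasDerivAt.const_mul (deriv u 0)
    have := hU.sub hlin
    rw [hd x (Ico_subset_Icc_self hx), sub_self] at this
    exact this.hasDerivWithinAt
  intro x hx
  have := constant_of_has_deriv_right_zero hcont.continuousOn hder x hx
  simp only [Complex.ofReal_zero, mul_zero, sub_zero] at this
  linear_combination this

lemma edge_rep {lam L : ℝ} (hL : 0 < L) {u : ℝ → ℂ} (hu : ContDiff ℝ 2 u)
    (hode : ∀ x ∈ Icc (0:ℝ) L, deriv (deriv u) x = -(lam:ℂ) * u x) :
    u L = u 0 * Complex.cos (kk lam * L) + deriv u 0 * SS lam L ∧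
    deriv u L = deriv u 0 * Complex.cos (kk lam * L) - (lam:ℂ) * u 0 * SS lam L := by
  set k := kk lam with hkdef
  have hk2 : k ^ 2 = (lam : ℂ) := kk_sq lam
  have hc1 : (Complex.I * k) ^ 2 = -(lam:ℂ) := by
    rw [mul_pow, Complex.I_sq, hk2]; ring
  have hc2 : (-(Complex.I * k)) ^ 2 = -(lam:ℂ) := by rw [neg_pow]; simp [hc1]
  have hmem : (L : ℝ) ∈ Icc (0:ℝ) L := ⟨hL.le, le_refl L⟩
  have h1 := exp_factor hu hode hc1 L hmem
  have h2 := exp_factor hu hode hc2 L hmem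
  set C := Complex.cos (k * L) with hC
  set Sn := Complex.sin (k * L) with hSn
  have hE1 : Complex.exp (-(Complex.I * k * (L:ℂ))) = C - Sn * Complex.I := by
    rw [show -(Complex.I * k * (L:ℂ)) = (-(k * L)) * Complex.I by ring, Complex.exp_mul_I,
      Complex.cos_neg, Complex.sin_neg]
    ring
  have hE2 : Complex.exp (-(-(Complex.I * k) * (L:ℂ))) = C + Sn * Complex.I := by
    rw [show -(-(Complex.I * k) * (L:ℂ)) = (k * L) * Complex.I by ring, Complex.exp_mul_I]
  rw [hE1] at h1
  rw [hE2] at h2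
  have hpy : Sn ^ 2 + C ^ 2 = 1 := Complex.sin_sq_add_cos_sq _
  have hI : Complex.I ^ 2 = -1 := Complex.I_sq
  have hSk : Sn = k * SS lam L := sin_eq_kk_mul_SS lam L
  have ha : deriv u L + Complex.I * k * u L
      = (C + Sn * Complex.I) * (deriv u 0 + Complex.I * k * u 0) := by
    linear_combination (C + Sn * Complex.I) * h1
      + (Sn ^ 2 * (deriv u L + Complex.I * k * u L)) * hI
      - (deriv u L + Complex.I * k * u L) * hpy
  have hb : deriv u L - Complex.I * k * u L
      = (C - Sn * Complex.I) * (deriv u 0 - Complex.I * k * u 0) := by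
    linear_combination (C - Sn * Complex.I) * h2
      + (Sn ^ 2 * (deriv u L - Complex.I * k * u L)) * hI
      - (deriv u L - Complex.I * k * u L) * hpy
  constructor
  · by_cases hlam : lam = 0
    · subst hlam
      have hk0 : k = 0 := by simp [hkdef, kk]
      have := deriv_const_on hu hode L hmem
      rw [this]
      have hC0 : C = 1 := by rw [hC, hk0]; simp
      rw [hC0, SS_zero_lam]
      ring
    · have hkne : k ≠ 0 := kk_ne_zero hlam
      have h3 : (2 * Complex.I * k) * u L
          = (2 * Complex.I * k) * (u 0 * C + deriv u 0 * SS lam L) := by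
        linear_combination ha - hb + (2 * Complex.I * deriv u 0) * hSk
      exact mul_left_cancel₀
        (mul_ne_zero (mul_ne_zero two_ne_zero Complex.I_ne_zero) hkne) h3
  · linear_combination ha / 2 + hb / 2 + (k * u 0 * Sn) * hI
      + (- k * u 0) * hSk + (- u 0 * SS lam L) * hk2

lemma edge_zero {lam L : ℝ} {u : ℝ → ℂ} (hu : ContDiff ℝ 2 u)
    (hode : ∀ x ∈ Icc (0:ℝ) L, deriv (deriv u) x = -(lam:ℂ) * u x)
    (h0 : u 0 = 0) (h0' : deriv u 0 = 0) : ∀ x ∈ Icc (0:ℝ) L, u x = 0 := by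
  set k := kk lam with hkdef
  have hk2 : k ^ 2 = (lam : ℂ) := kk_sq lam
  have hc1 : (Complex.I * k) ^ 2 = -(lam:ℂ) := by
    rw [mul_pow, Complex.I_sq, hk2]; ring
  have hc2 : (-(Complex.I * k)) ^ 2 = -(lam:ℂ) := by rw [neg_pow]; simp [hc1]
  have h1 := exp_factor hu hode hc1
  have h2 := exp_factor hu hode hc2
  have hd : ∀ x ∈ Icc (0:ℝ) L, deriv u x = 0 := by
    intro x hx
    have e1 := h1 x hx
    have e2 := h2 x hx
    rw [h0, h0'] at e1 e2
    simp only [mul_zero, add_zero, zero_add] at e1 e2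
    rw [mul_eq_zero] at e1 e2
    have e1' := e1.resolve_left (Complex.exp_ne_zero _)
    have e2' := e2.resolve_left (Complex.exp_ne_zero _)
    linear_combination e1' / 2 + e2' / 2
  have hu1 : Differentiable ℝ u := hu.differentiable two_ne_zero
  have hder : ∀ x ∈ Ico (0:ℝ) L, HasDerivWithinAt u 0 (Ici x) x := by
    intro x hx
    have hU : HasDerivAt u (deriv u x) x := (hu1 x).hasDerivAt
    rw [hd x (Ico_subset_Icc_self hx)] at hU
    exact hU.hasDerivWithinAt
  intro x hx
  have := constant_of_has_deriv_right_zero hu1.continuous.continuousOn hder x hx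
  rw [this, h0]

lemma SS_ne_zero {lam L : ℝ} (hL : 0 < L)
    (hD : ∀ n : ℕ, 1 ≤ n → lam ≠ π ^ 2 * (n : ℝ) ^ 2 / L ^ 2) : SS lam L ≠ 0 := by
  by_cases hlam : lam = 0
  · subst hlam
    rw [SS_zero_lam]
    exact_mod_cast hL.ne'
  · have hkne : kk lam ≠ 0 := kk_ne_zero hlam
    intro hS0
    have hsin : Complex.sin (kk lam * L) = 0 := by
      rw [sin_eq_kk_mul_SS, hS0, mul_zero]
    obtain ⟨n, hn⟩ := Complex.sin_eq_zero_iff.mp hsin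
    rcases lt_or_gt_of_ne hlam with hneg | hpos
    · have h1 : Real.sqrt lam = 0 := Real.sqrt_eq_zero'.mpr hneg.le
      have him : (kk lam * (L:ℂ)).im = Real.sqrt (-lam) * L := by
        simp [kk, h1, Complex.mul_im]
      rw [hn] at him
      have : ((n:ℂ) * (π:ℂ)).im = 0 := by
        simp
      rw [this] at him
      have hsq : 0 < Real.sqrt (-lam) := Real.sqrt_pos.mpr (by linarith)
      nlinarith [hsq, hL]
    · have h1 : Real.sqrt (-lam) = 0 := Real.sqrt_eq_zero'.mpr (by linarith)
      have hkr : kk lam = ((Real.sqrt lam : ℝ) : ℂ) := by rw [kk, h1]; simp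
      have hre : Real.sqrt lam * L = n * π := by
        rw [hkr] at hn
        exact_mod_cast hn
      have hsq : 0 < Real.sqrt lam := Real.sqrt_pos.mpr hpos
      have hnpos : 0 < (n : ℝ) := by
        have h2 : 0 < (n : ℝ) * π := by rw [← hre]; positivity
        nlinarith [Real.pi_pos]
      have hn0 : 0 < n := by exact_mod_cast hnpos
      have h2 : Real.sqrt lam ^ 2 = lam := Real.sq_sqrt hpos.le
      have h3 : (Real.sqrt lam * L) ^ 2 = ((n:ℝ) * π) ^ 2 := by rw [hre]
      have hsq2 : lam * L ^ 2 = π ^ 2 * (n:ℝ) ^ 2 := by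
        linear_combination h3 - L ^ 2 * h2
      have hcastZ : ((n.toNat : ℤ)) = n := Int.toNat_of_nonneg hn0.le
      have hcast : ((n.toNat : ℕ) : ℝ) = (n : ℝ) := by exact_mod_cast congrArg (Int.cast : ℤ → ℝ) hcastZ
      refine hD n.toNat (by omega) ?_
      rw [hcast, eq_div_iff (by positivity : L ^ 2 ≠ 0)]
      linarith [hsq2]
  
lemma SS_cont (L : ℝ) : Continuous fun lam : ℝ => SS lam L := by
  have h : Continuous (Function.uncurry fun lam t : ℝ => Complex.cos (kk lam * t)) := by
    apply Complex.continuous_cos.comp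
    exact (kk_cont.comp continuous_fst).mul (Complex.continuous_ofReal.comp continuous_snd)
  exact intervalIntegral.continuous_parametric_intervalIntegral_of_continuous h continuous_const

noncomputable def BB (L lam : ℝ) : ℝ :=
  (1 + ‖Complex.cos (kk lam * L)‖) / ‖SS lam L‖

noncomputable def FF (m : ℕ) (ℓ : Fin m → ℝ) (lam : ℝ) : ℝ :=
  ∑ e : Fin m, (BB (ℓ e) lam + ‖Complex.cos (kk lam * (ℓ e))‖ * BB (ℓ e) lam
    + |lam| * ‖SS lam (ℓ e)‖)

lemma deriv_bounds {lam L : ℝ} (hL : 0 < L) {u : ℝ → ℂ} (hu : ContDiff ℝ 2 u)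
    (hode : ∀ x ∈ Icc (0:ℝ) L, deriv (deriv u) x = -(lam:ℂ) * u x)
    (hS : SS lam L ≠ 0) {M : ℝ} (h0 : ‖u 0‖ ≤ M) (h1 : ‖u L‖ ≤ M) :
    ‖deriv u 0‖ ≤ BB L lam * M ∧
    ‖deriv u L‖ ≤ (‖Complex.cos (kk lam * L)‖ * BB L lam + |lam| * ‖SS lam L‖) * M := by
  obtain ⟨hE1, hE2⟩ := edge_rep hL hu hode
  have hSpos : 0 < ‖SS lam L‖ := norm_pos_iff.mpr hS
  have hMnn : 0 ≤ M := le_trans (norm_nonneg _) h0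
  have hsub : deriv u 0 * SS lam L = u L - u 0 * Complex.cos (kk lam * L) := by
    linear_combination -hE1
  have key : ‖deriv u 0‖ * ‖SS lam L‖ ≤ (1 + ‖Complex.cos (kk lam * L)‖) * M := by
    rw [← norm_mul, hsub]
    calc ‖u L - u 0 * Complex.cos (kk lam * L)‖
        ≤ ‖u L‖ + ‖u 0‖ * ‖Complex.cos (kk lam * L)‖ := by
          refine (norm_sub_le _ _).trans ?_
          rw [norm_mul]
      _ ≤ M + M * ‖Complex.cos (kk lam * L)‖ :=
          add_le_add h1 (mul_le_mul_of_nonneg_right h0 (norm_nonneg _))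
      _ = (1 + ‖Complex.cos (kk lam * L)‖) * M := by ring
  have hB0 : ‖deriv u 0‖ ≤ BB L lam * M := by
    rw [BB, div_mul_eq_mul_div, le_div_iff₀ hSpos]
    exact key
  refine ⟨hB0, ?_⟩
  have h2 : ‖deriv u L‖ ≤ ‖deriv u 0‖ * ‖Complex.cos (kk lam * L)‖
      + |lam| * ‖u 0‖ * ‖SS lam L‖ := by
    rw [hE2]
    refine (norm_sub_le _ _).trans ?_
    rw [norm_mul, norm_mul, norm_mul, Complex.norm_real, Real.norm_eq_abs]
  calc ‖deriv u L‖ ≤ ‖deriv u 0‖ * ‖Complex.cos (kk lam * L)‖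
        + |lam| * ‖u 0‖ * ‖SS lam L‖ := h2
    _ ≤ (BB L lam * M) * ‖Complex.cos (kk lam * L)‖ + |lam| * M * ‖SS lam L‖ := by
        refine add_le_add (mul_le_mul_of_nonneg_right hB0 (norm_nonneg _)) ?_
        refine mul_le_mul_of_nonneg_right ?_ (norm_nonneg _)
        exact mul_le_mul_of_nonneg_left h0 (abs_nonneg lam)
    _ = (‖Complex.cos (kk lam * L)‖ * BB L lam + |lam| * ‖SS lam L‖) * M := by ring

lemma FF_cont {m : ℕ} (ℓ : Fin m → ℝ) {K : Set ℝ}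
    (hS : ∀ lam ∈ K, ∀ e : Fin m, SS lam (ℓ e) ≠ 0) :
    ContinuousOn (FF m ℓ) K := by
  apply continuousOn_finset_sum
  intro e _
  have hcos : Continuous fun lam : ℝ => ‖Complex.cos (kk lam * (ℓ e))‖ :=
    (Complex.continuous_cos.comp (kk_cont.mul continuous_const)).norm
  have hSn : Continuous fun lam : ℝ => ‖SS lam (ℓ e)‖ := (SS_cont (ℓ e)).norm
  have hBc : ContinuousOn (fun lam => BB (ℓ e) lam) K := by
    apply ContinuousOn.div ((continuous_const.add hcos).continuousOn) hSn.continuousOn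
    intro lam hlam
    exact norm_ne_zero_iff.mpr (hS lam hlam e)
  exact (hBc.add (hcos.continuousOn.mul hBc)).add
    (continuous_abs.continuousOn.mul hSn.continuousOn)

end DecorGapAux

open DecorGapAux

/-- The core of the decoration gap theorem.  A finite quantum graph is given by a finite vertex
set `V`, edges `e : Fin m` of lengths `ℓ e > 0` with endpoint map `ends`.  Let `K ⊂ ℝ` be a
compact set disjoint from the Dirichlet spectrum `⋃_{e,n≥1} {π²n²/ℓ(e)²}` and let
`Λ : ℝ → ℝ` blow up (`|Λ(λ)| → ∞`) as `λ → λ₀`.  Then in a punctured neighborhood of `λ₀`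
there is no nonzero function `u` on the graph which is `C²` on each edge, solves `-u'' = λu` on
each edge, is continuous at the vertices (with vertex values `φ`), and satisfies the vertex
condition `∑_{e ∋ v} (du/dx_e)(v) = -Λ(λ) u(v)` at every vertex. -/
theorem decoration_gap_no_nonzero_solution
    (V : Type) [Fintype V] [DecidableEq V] (m : ℕ)
    (ℓ : Fin m → ℝ) (hℓ : ∀ e, 0 < ℓ e) (ends : Fin m → V × V)
    (K : Set ℝ) (hK : IsCompact K)
    (hKD : ∀ lam ∈ K, ∀ e : Fin m, ∀ n : ℕ, 1 ≤ n → lam ≠ π ^ 2 * (n : ℝ) ^ 2 / (ℓ e) ^ 2)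
    (lam₀ : ℝ) (Λ : ℝ → ℝ)
    (hΛ : Tendsto (fun lam => |Λ lam|) (𝓝[≠] lam₀) atTop) :
    ∃ δ > (0 : ℝ), ∀ lam ∈ K, lam ≠ lam₀ → |lam - lam₀| < δ →
      ∀ (u : Fin m → ℝ → ℂ) (φ : V → ℂ),
        (∀ e, ContDiff ℝ 2 (u e)) →
        (∀ e, ∀ x ∈ Icc (0 : ℝ) (ℓ e), deriv (deriv (u e)) x = -(lam : ℂ) * u e x) →
        (∀ e, u e 0 = φ (ends e).1 ∧ u e (ℓ e) = φ (ends e).2) →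
        (∀ v : V,
          (∑ e : Fin m,
            ((if (ends e).1 = v then deriv (u e) 0 else 0) +
             (if (ends e).2 = v then -deriv (u e) (ℓ e) else 0))) = -(Λ lam : ℂ) * φ v) →
        (∀ v, φ v = 0) ∧ ∀ e, ∀ x ∈ Icc (0 : ℝ) (ℓ e), u e x = 0 := by
  classical
  have hSne : ∀ lam ∈ K, ∀ e : Fin m, SS lam (ℓ e) ≠ 0 := fun lam hlam e =>
    SS_ne_zero (hℓ e) (fun n hn => hKD lam hlam e n hn)
  obtain ⟨C, hC⟩ := (hK.image_of_continuousOn (FF_cont ℓ hSne)).bddAbove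
  have hC' : ∀ lam ∈ K, FF m ℓ lam ≤ max C 0 := fun lam h =>
    le_trans (hC ⟨lam, h, rfl⟩) (le_max_left _ _)
  have hev : ∀ᶠ lam in 𝓝[≠] lam₀, max C 0 < |Λ lam| :=
    hΛ.eventually (eventually_gt_atTop (max C 0))
  rw [eventually_iff, Metric.mem_nhdsWithin_iff] at hev
  obtain ⟨δ, hδ, hball⟩ := hev
  refine ⟨δ, hδ, ?_⟩
  intro lam hlamK hne hdist u φ hu hode hbc hvc
  have hΛbig : max C 0 < |Λ lam| := hball ⟨Metric.mem_ball.mpr (by rwa [Real.dist_eq]), hne⟩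
  have hφ : ∀ v, φ v = 0 := by
    rcases isEmpty_or_nonempty V with hV | hV
    · exact fun v => (hV.false v).elim
    · obtain ⟨v₀, -, hv₀⟩ := Finset.exists_max_image Finset.univ (fun v => ‖φ v‖)
        ⟨Classical.arbitrary V, Finset.mem_univ _⟩
      have hMv : ∀ v, ‖φ v‖ ≤ ‖φ v₀‖ := fun v => hv₀ v (Finset.mem_univ v)
      have hbd : ∀ e : Fin m,
          ‖deriv (u e) 0‖ ≤ BB (ℓ e) lam * ‖φ v₀‖ ∧
          ‖deriv (u e) (ℓ e)‖ ≤ (‖Complex.cos (kk lam * (ℓ e))‖ * BB (ℓ e) lam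
            + |lam| * ‖SS lam (ℓ e)‖) * ‖φ v₀‖ := by
        intro e
        refine deriv_bounds (hℓ e) (hu e) (hode e) (hSne lam hlamK e) ?_ ?_
        · rw [(hbc e).1]; exact hMv _
        · rw [(hbc e).2]; exact hMv _
      have hsum : |Λ lam| * ‖φ v₀‖ ≤ FF m ℓ lam * ‖φ v₀‖ := by
        have hv := hvc v₀
        have hnorm : ‖(-(Λ lam : ℂ)) * φ v₀‖ = |Λ lam| * ‖φ v₀‖ := by
          rw [norm_mul, norm_neg, Complex.norm_real, Real.norm_eq_abs]
        calc |Λ lam| * ‖φ v₀‖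
            = ‖∑ e : Fin m,
              ((if (ends e).1 = v₀ then deriv (u e) 0 else 0) +
               (if (ends e).2 = v₀ then -deriv (u e) (ℓ e) else 0))‖ := by
              rw [hv, hnorm]
          _ ≤ ∑ e : Fin m,
              ‖(if (ends e).1 = v₀ then deriv (u e) 0 else 0) +
               (if (ends e).2 = v₀ then -deriv (u e) (ℓ e) else 0)‖ := norm_sum_le _ _
          _ ≤ ∑ e : Fin m, (BB (ℓ e) lam + ‖Complex.cos (kk lam * (ℓ e))‖ * BB (ℓ e) lam
              + |lam| * ‖SS lam (ℓ e)‖) * ‖φ v₀‖ := by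
              refine Finset.sum_le_sum (fun e _ => ?_)
              have t1 : ‖(if (ends e).1 = v₀ then deriv (u e) 0 else 0)‖
                  ≤ ‖deriv (u e) 0‖ := by
                split <;> simp
              have t2 : ‖(if (ends e).2 = v₀ then -deriv (u e) (ℓ e) else 0)‖
                  ≤ ‖deriv (u e) (ℓ e)‖ := by
                split <;> simp
              calc ‖(if (ends e).1 = v₀ then deriv (u e) 0 else 0) +
                   (if (ends e).2 = v₀ then -deriv (u e) (ℓ e) else 0)‖
                  ≤ ‖deriv (u e) 0‖ + ‖deriv (u e) (ℓ e)‖ :=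
                    (norm_add_le _ _).trans (add_le_add t1 t2)
                _ ≤ BB (ℓ e) lam * ‖φ v₀‖ + (‖Complex.cos (kk lam * (ℓ e))‖ * BB (ℓ e) lam
                    + |lam| * ‖SS lam (ℓ e)‖) * ‖φ v₀‖ :=
                    add_le_add (hbd e).1 (hbd e).2
                _ = (BB (ℓ e) lam + ‖Complex.cos (kk lam * (ℓ e))‖ * BB (ℓ e) lam
                    + |lam| * ‖SS lam (ℓ e)‖) * ‖φ v₀‖ := by ring
          _ = FF m ℓ lam * ‖φ v₀‖ := by rw [FF, Finset.sum_mul]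
      have hM0 : ‖φ v₀‖ = 0 := by
        by_contra hM
        have hMpos : 0 < ‖φ v₀‖ := lt_of_le_of_ne (norm_nonneg _) (Ne.symm hM)
        have h2 : FF m ℓ lam ≤ max C 0 := hC' lam hlamK
        nlinarith [hsum, hΛbig, hMpos, h2]
      intro v
      have hv := hMv v
      rw [hM0] at hv
      exact norm_le_zero_iff.mp hv
  refine ⟨hφ, ?_⟩
  intro e
  have h00 : u e 0 = 0 := by rw [(hbc e).1, hφ]
  have h0L : u e (ℓ e) = 0 := by rw [(hbc e).2, hφ]
  have hE1 := (edge_rep (hℓ e) (hu e) (hode e)).1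
  rw [h00, h0L, zero_mul, zero_add] at hE1
  have hd0 : deriv (u e) 0 = 0 := by
    rcases mul_eq_zero.mp hE1.symm with h | h
    · exact h
    · exact absurd h (hSne lam hlamK e)
  exact edge_zero (hu e) (hode e) h00 hd0
end
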